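/- arXiv:2512.18358 — 3 statements merged into one kernel-verified Lean document; each statement's English description precedes it below -/
import Mathlib

section
/- Let d ≥ 1 and 0 < m < 1 with m < 1 − 2/d. Then ∫₀^π (1 − cos θ)^{1/(m−1)} sin^{d−1} θ cos θ dθ divided by ∫₀^π (1 − cos θ)^{1/(m−1)} sin^{d−1} θ dθ equals 1/((1−m)d − 1). -/
/-!
Let `w θ = (1 - cos θ) ^ α * sin θ ^ (d - 1)`. On `(0, π)` the function
`(1 - cos θ) ^ α * sin θ ^ d = (1 - cos θ) ^ (α + d / 2) * (1 + cos θ) ^ (d / 2)` has derivative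
`w θ * (α + (α + d) * cos θ)`, and the second form shows that it tends to `0` at both endpoints
when `α > -d / 2`. Integrating the derivative gives `α ∫ w + (α + d) ∫ w cos = 0`, so the
quotient is `-α / (α + d)`, which is `1 / ((1 - m) d - 1)` for `α = 1 / (m - 1)`.
-/

open MeasureTheory Real Set

-- The density `(1 - cos θ) ^ α` on `S^d` in the polar angle `θ`, times the area factor.
noncomputable def zonalWeight (α : ℝ) (d : ℕ) (θ : ℝ) : ℝ :=
  (1 - cos θ) ^ α * sin θ ^ (d - 1)

lemma one_sub_cos_pos_of_mem_Ioo {θ : ℝ} (hθ : θ ∈ Ioo 0 π) : 0 < 1 - cos θ := by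
  have := cos_lt_cos_of_nonneg_of_le_pi le_rfl hθ.2.le hθ.1
  rw [cos_zero] at this
  linarith

lemma one_add_cos_pos_of_mem_Ioo {θ : ℝ} (hθ : θ ∈ Ioo 0 π) : 0 < 1 + cos θ := by
  have := cos_lt_cos_of_nonneg_of_le_pi hθ.1.le le_rfl hθ.2
  rw [cos_pi] at this
  linarith

lemma zonalWeight_pos {α : ℝ} {d : ℕ} {θ : ℝ} (hθ : θ ∈ Ioo 0 π) : 0 < zonalWeight α d θ :=
  mul_pos (rpow_pos_of_pos (one_sub_cos_pos_of_mem_Ioo hθ) α)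
    (pow_pos (sin_pos_of_pos_of_lt_pi hθ.1 hθ.2) _)

lemma continuousOn_zonalWeight {α : ℝ} {d : ℕ} : ContinuousOn (zonalWeight α d) (Ioo 0 π) :=
  ((continuous_const.sub continuous_cos).continuousOn.rpow_const fun _ hθ =>
    Or.inl (one_sub_cos_pos_of_mem_Ioo hθ).ne').mul (continuous_sin.pow _).continuousOn

lemma exists_one_sub_cos_rpow_le (α : ℝ) :
    ∃ C, ∀ θ ∈ Ioo 0 π, (1 - cos θ) ^ α ≤ C * θ ^ (2 * α) := by
  have hscale : ∀ c : ℝ, 0 < c → ∀ θ : ℝ, 0 < θ → (c * θ ^ 2) ^ α = c ^ α * θ ^ (2 * α) := by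
    intro c hc θ hθ
    rw [mul_rpow hc.le (by positivity), ← rpow_natCast, ← rpow_mul hθ.le]
    norm_num
  -- `2 / π ^ 2 * θ ^ 2 ≤ 1 - cos θ ≤ θ ^ 2 / 2`; which side is needed depends on the sign of `α`.
  rcases le_total α 0 with hα | hα
  · refine ⟨(2 / π ^ 2) ^ α, fun θ hθ => ?_⟩
    have hcos := cos_le_one_sub_mul_cos_sq (abs_le.2 ⟨by linarith [hθ.1, pi_pos], hθ.2.le⟩)
    rw [← hscale _ (by positivity) _ hθ.1]
    exact rpow_le_rpow_of_nonpos (by have := hθ.1; positivity) (by linarith) hα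
  · refine ⟨(1 / 2) ^ α, fun θ hθ => ?_⟩
    have hcos := one_sub_sq_div_two_le_cos (x := θ)
    rw [← hscale _ (by norm_num) _ hθ.1]
    exact rpow_le_rpow (sub_nonneg.2 (cos_le_one θ)) (by linarith) hα

lemma integrableOn_zonalWeight {α : ℝ} {d : ℕ} (hd : 1 ≤ d) (hα : -(d : ℝ) / 2 < α) :
    IntegrableOn (zonalWeight α d) (Ioo 0 π) := by
  obtain ⟨C, hC⟩ := exists_one_sub_cos_rpow_le α
  have hexp : -1 < 2 * α + ((d - 1 : ℕ) : ℝ) := by push_cast [Nat.cast_sub hd]; linarith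
  have hdom : IntegrableOn (fun θ => C * θ ^ (2 * α + ((d - 1 : ℕ) : ℝ))) (Ioo 0 π) :=
    ((intervalIntegral.intervalIntegrable_rpow' hexp).1.mono_set Ioo_subset_Ioc_self).const_mul C
  refine hdom.mono' (continuousOn_zonalWeight.aestronglyMeasurable measurableSet_Ioo) ?_
  filter_upwards [ae_restrict_mem measurableSet_Ioo] with θ hθ
  have hC0 : 0 ≤ C * θ ^ (2 * α) :=
    (rpow_nonneg (one_sub_cos_pos_of_mem_Ioo hθ).le α).trans (hC θ hθ)
  rw [norm_of_nonneg (zonalWeight_pos hθ).le, rpow_add hθ.1, rpow_natCast, ← mul_assoc]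
  have hsin := (sin_pos_of_pos_of_lt_pi hθ.1 hθ.2).le
  exact mul_le_mul (hC θ hθ) (pow_le_pow_left₀ hsin (sin_le hθ.1.le) _) (pow_nonneg hsin _) hC0

lemma integrableOn_zonalWeight_mul_cos {α : ℝ} {d : ℕ} (hd : 1 ≤ d) (hα : -(d : ℝ) / 2 < α) :
    IntegrableOn (fun θ => zonalWeight α d θ * cos θ) (Ioo 0 π) :=
  (integrableOn_zonalWeight hd hα).mul_bdd continuous_cos.aestronglyMeasurable
    (ae_of_all _ fun θ => (norm_eq_abs _).trans_le (abs_cos_le_one θ))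

lemma hasDerivAt_zonalWeight_succ {α : ℝ} {d : ℕ} {θ : ℝ} (hd : 1 ≤ d) (hθ : θ ∈ Ioo 0 π) :
    HasDerivAt (zonalWeight α (d + 1))
      (α * zonalWeight α d θ + (α + d) * (zonalWeight α d θ * cos θ)) θ := by
  have hu := one_sub_cos_pos_of_mem_Ioo hθ
  have hsub : HasDerivAt (fun x => 1 - cos x) (sin θ) θ := by
    simpa using (hasDerivAt_cos θ).const_sub 1
  have hprod : HasDerivAt (zonalWeight α (d + 1)) _ θ :=
    (hsub.rpow_const (Or.inl hu.ne')).mul ((hasDerivAt_sin θ).fun_pow d)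
  convert hprod using 1
  obtain ⟨k, rfl⟩ : ∃ k, d = k + 1 := ⟨d - 1, by omega⟩
  have hsin_sq : sin θ ^ 2 = (1 - cos θ) * (1 + cos θ) := by rw [sin_sq]; ring
  simp only [zonalWeight, Nat.add_sub_cancel, rpow_sub_one hu.ne', Nat.cast_add, Nat.cast_one]
  field_simp
  linear_combination (-(α * sin θ ^ k)) * hsin_sq

lemma zonalWeight_succ_eq {α : ℝ} {d : ℕ} {θ : ℝ} (hθ : θ ∈ Ioo 0 π) :
    zonalWeight α (d + 1) θ = (1 - cos θ) ^ (α + d / 2) * (1 + cos θ) ^ ((d : ℝ) / 2) := by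
  have hu := one_sub_cos_pos_of_mem_Ioo hθ
  have hs := (sin_pos_of_pos_of_lt_pi hθ.1 hθ.2).le
  have hsin_pow : sin θ ^ d = ((1 - cos θ) * (1 + cos θ)) ^ ((d : ℝ) / 2) := by
    rw [show (1 - cos θ) * (1 + cos θ) = sin θ ^ (2 : ℝ) by rw [rpow_two, sin_sq]; ring,
      ← rpow_mul hs, ← rpow_natCast]
    ring_nf
  rw [zonalWeight, Nat.add_sub_cancel, hsin_pow, mul_rpow hu.le (one_add_cos_pos_of_mem_Ioo hθ).le,
    rpow_add hu, mul_assoc]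

lemma zonalWeight_moment_relation {α : ℝ} {d : ℕ} (hd : 1 ≤ d) (hα : -(d : ℝ) / 2 < α) :
    α * (∫ θ in Ioo 0 π, zonalWeight α d θ) +
      (α + d) * ∫ θ in Ioo 0 π, zonalWeight α d θ * cos θ = 0 := by
  have hd2 : (0 : ℝ) < d / 2 := half_pos (Nat.cast_pos.2 hd)
  have hαd : 0 < α + d / 2 := by linarith
  -- `G` extends `zonalWeight α (d + 1)` continuously to `[0, π]` and vanishes at both ends.
  set G : ℝ → ℝ := fun θ => (1 - cos θ) ^ (α + d / 2) * (1 + cos θ) ^ ((d : ℝ) / 2)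
  have hG : Continuous G :=
    ((continuous_const.sub continuous_cos).rpow_const fun _ => Or.inr hαd.le).mul
      ((continuous_const.add continuous_cos).rpow_const fun _ => Or.inr hd2.le)
  have hG' : ∀ θ ∈ Ioo 0 π,
      HasDerivAt G (α * zonalWeight α d θ + (α + d) * (zonalWeight α d θ * cos θ)) θ :=
    fun θ hθ => (hasDerivAt_zonalWeight_succ hd hθ).congr_of_eventuallyEq
      (Filter.eventually_of_mem (Ioo_mem_nhds hθ.1 hθ.2) fun x hx => (zonalWeight_succ_eq hx).symm)
  have h₀ := (integrableOn_zonalWeight hd hα).const_mul α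
  have h₁ := (integrableOn_zonalWeight_mul_cos hd hα).const_mul (α + d)
  have hftc := intervalIntegral.integral_eq_sub_of_hasDerivAt_of_le pi_pos.le hG.continuousOn hG'
    ((intervalIntegrable_iff_integrableOn_Ioo_of_le pi_pos.le).2 (h₀.add h₁))
  rw [intervalIntegral.integral_of_le pi_pos.le, integral_Ioc_eq_integral_Ioo, integral_add h₀ h₁,
    integral_const_mul, integral_const_mul] at hftc
  rw [hftc]
  simp [G, zero_rpow hαd.ne', zero_rpow hd2.ne']

lemma integral_zonalWeight_pos {α : ℝ} {d : ℕ} (hd : 1 ≤ d) (hα : -(d : ℝ) / 2 < α) :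
    0 < ∫ θ in Ioo 0 π, zonalWeight α d θ := by
  have hsupp : Function.support (zonalWeight α d) ∩ Ioo 0 π = Ioo 0 π :=
    inter_eq_right.2 fun θ hθ => (zonalWeight_pos hθ).ne'
  rw [setIntegral_pos_iff_support_of_nonneg_ae
    (ae_restrict_of_forall_mem measurableSet_Ioo fun θ hθ => (zonalWeight_pos hθ).le)
    (integrableOn_zonalWeight hd hα), hsupp]
  simp [pi_pos]

theorem centre_of_mass_singular_density_general
    (d : ℕ) (hd : 1 ≤ d) (m : ℝ) (hm1 : m < 1)
    (hmd : m < 1 - 2 / (d : ℝ)) :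
    (∫ θ in Set.Ioo 0 π,
        (1 - Real.cos θ) ^ ((1 : ℝ) / (m - 1)) * Real.sin θ ^ (d - 1) * Real.cos θ) /
      (∫ θ in Set.Ioo 0 π,
        (1 - Real.cos θ) ^ ((1 : ℝ) / (m - 1)) * Real.sin θ ^ (d - 1)) =
      1 / ((1 - m) * d - 1) := by
  set α : ℝ := 1 / (m - 1)
  have hm : 0 < 1 - m := by linarith
  have hαm : α * (1 - m) = -1 := by
    rw [← neg_sub, mul_neg, one_div_mul_cancel (by linarith)]
  have hdm : 2 < (1 - m) * d :=
    (div_lt_iff₀ (Nat.cast_pos.2 hd : (0 : ℝ) < d)).1 (by linarith)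
  have hα : -(d : ℝ) / 2 < α := by nlinarith
  have hrel := zonalWeight_moment_relation hd hα
  have hD := integral_zonalWeight_pos hd hα
  set D := ∫ θ in Ioo 0 π, zonalWeight α d θ
  set N := ∫ θ in Ioo 0 π, zonalWeight α d θ * cos θ
  change N / D = _
  rw [div_eq_div_iff hD.ne' (by linarith)]
  linear_combination (1 - m) * hrel - (D + N) * hαm

/-- The norm of the centre of mass of the density proportional to `(1 - cos θ)^{1/(m-1)}`:
the quotient of the two moment integrals equals `1/((1-m)d - 1)`. -/
theorem centre_of_mass_singular_density
    (d : ℕ) (hd : 1 ≤ d) (m : ℝ) (hm0 : 0 < m) (hm1 : m < 1)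
    (hmd : m < 1 - 2 / (d : ℝ)) :
    (∫ θ in Set.Ioo 0 π,
        (1 - Real.cos θ) ^ ((1 : ℝ) / (m - 1)) * Real.sin θ ^ (d - 1) * Real.cos θ) /
      (∫ θ in Set.Ioo 0 π,
        (1 - Real.cos θ) ^ ((1 : ℝ) / (m - 1)) * Real.sin θ ^ (d - 1)) =
      1 / ((1 - m) * d - 1) :=
  centre_of_mass_singular_density_general d hd m hm1 hmd
end

section
/- Let d ≥ 1, 0 < m < 1, and η > 1. Then ∫₀^π (η − cos θ)^{1/(m−1)} sin^{d−1} θ cos θ dθ > 0. -/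
open Real

/-- For `η > 1`, the first moment integral of `(η - cos θ)^{1/(m-1)} sin^{d-1} θ` against
`cos θ` on `(0, π)` is strictly positive. -/
theorem first_moment_pos
    (d : ℕ) (hd : 1 ≤ d) (m : ℝ) (hm0 : 0 < m) (hm1 : m < 1) (η : ℝ) (hη : 1 < η) :
    0 < ∫ θ in (0 : ℝ)..π,
        (η - Real.cos θ) ^ ((1 : ℝ) / (m - 1)) * Real.sin θ ^ (d - 1) * Real.cos θ := by
  set p : ℝ := (1 : ℝ) / (m - 1) with hp
  have hpneg : p < 0 := by
    apply div_neg_of_pos_of_neg one_pos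
    linarith
  set f : ℝ → ℝ := fun θ => (η - Real.cos θ) ^ p * Real.sin θ ^ (d - 1) * Real.cos θ with hf
  have hbase : ∀ θ : ℝ, 0 < η - Real.cos θ := fun θ => by
    have := Real.cos_le_one θ; linarith
  have hcont : Continuous f := by
    apply Continuous.mul
    apply Continuous.mul
    · exact (continuous_const.sub Real.continuous_cos).rpow_const
        (fun x => Or.inl (ne_of_gt (hbase x)))
    · exact (Real.continuous_sin.pow _)
    · exact Real.continuous_cos
  have hsplit : (∫ θ in (0:ℝ)..π, f θ) =
      (∫ θ in (0:ℝ)..(π/2), f θ) + ∫ θ in (π/2)..π, f θ :=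
    (intervalIntegral.integral_add_adjacent_intervals
      (hcont.intervalIntegrable _ _) (hcont.intervalIntegrable _ _)).symm
  have hrefl : (∫ θ in (π/2)..π, f θ) = ∫ θ in (0:ℝ)..(π/2), f (π - θ) := by
    rw [intervalIntegral.integral_comp_sub_left f π]
    congr 1 <;> ring
  have hg : IntervalIntegrable (fun θ => f (π - θ)) MeasureTheory.volume 0 (π/2) := by
    apply Continuous.intervalIntegrable
    exact hcont.comp (continuous_const.sub continuous_id)
  have hcomb : (∫ θ in (0:ℝ)..π, f θ)
      = ∫ θ in (0:ℝ)..(π/2), (f θ + f (π - θ)) := by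
    rw [hsplit, hrefl, ← intervalIntegral.integral_add (hcont.intervalIntegrable _ _) hg]
  rw [hcomb]
  apply intervalIntegral.intervalIntegral_pos_of_pos_on
  · exact (hcont.intervalIntegrable _ _).add hg
  · intro x hx
    obtain ⟨hx0, hx2⟩ := hx
    have hsin : 0 < Real.sin x := Real.sin_pos_of_pos_of_lt_pi hx0 (by linarith [Real.pi_pos])
    have hcos : 0 < Real.cos x := Real.cos_pos_of_mem_Ioo ⟨by linarith [Real.pi_pos], hx2⟩
    have h1 : f (π - x) = -((η + Real.cos x) ^ p * Real.sin x ^ (d - 1) * Real.cos x) := by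
      simp only [hf, Real.cos_pi_sub, Real.sin_pi_sub, sub_neg_eq_add]
      ring
    have h2 : (η + Real.cos x) ^ p < (η - Real.cos x) ^ p :=
      Real.rpow_lt_rpow_of_neg (hbase x) (by linarith) hpneg
    have : f x + f (π - x)
        = ((η - Real.cos x) ^ p - (η + Real.cos x) ^ p) * Real.sin x ^ (d - 1) * Real.cos x := by
      rw [h1]; simp only [hf]; ring
    rw [this]
    exact mul_pos (mul_pos (sub_pos.mpr h2) (pow_pos hsin _)) hcos
  · positivity
end

section
/- Let d ≥ 1 and 0 < m < 1. Define H(η) = ((1−m)/m) (d w_d)^{m−1} · (∫₀^π (η − cos θ)^{1/(m−1)} sin^{d−1} θ cos θ dθ) · (∫₀^π (η − cos θ)^{1/(m−1)} sin^{d−1} θ dθ)^{m−2} for η > 1, where w_d is the volume of the d-dimensional unit ball. Then lim_{η→∞} H(η) = |S^d|^{m−1}/(m(d+1)). -/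
open MeasureTheory Real Filter Topology Set
open scoped Interval

/-!
Put `p = 1/(m-1)`. Factoring `η` out of `η - cos θ` gives `(η - cos θ)^p = η^p (1 - η⁻¹ cos θ)^p`,
and the powers of `η` in `H` combine to `η^(p(m-1)) = η`. Hence `H(η)` is a constant times
`η A(η⁻¹) B(η⁻¹)^(m-2)`, where `A(t) = ∫₀^π (1 - t cos θ)^p sin^(d-1) θ cos θ dθ` and
`B(t) = ∫₀^π (1 - t cos θ)^p sin^(d-1) θ dθ`. As `A(0) = 0`, differentiating under the integral
sign gives `η A(η⁻¹) → A'(0) = -p ∫₀^π cos² θ sin^(d-1) θ dθ = -p/(d+1) ∫₀^π sin^(d-1) θ dθ`,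
while `B(η⁻¹) → B(0) = ∫₀^π sin^(d-1) θ dθ`.
-/
theorem rpow_le_two_rpow_abs {x : ℝ} (q : ℝ) (hx₁ : 1 / 2 ≤ x) (hx₂ : x ≤ 2) :
    x ^ q ≤ 2 ^ |q| := by
  rcases le_total 0 q with hq | hq
  · rw [abs_of_nonneg hq]
    exact rpow_le_rpow (by linarith) hx₂ hq
  · calc x ^ q ≤ (1 / 2) ^ q := rpow_le_rpow_of_nonpos (by norm_num) hx₁ hq
      _ = 2 ^ |q| := by rw [abs_of_nonpos hq, one_div, inv_rpow zero_le_two, rpow_neg zero_le_two]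

theorem HasDerivAt.tendsto_mul_inv_atTop {f : ℝ → ℝ} {f' : ℝ} (hf : HasDerivAt f f' 0)
    (hf₀ : f 0 = 0) : Tendsto (fun η => η * f η⁻¹) atTop (𝓝 f') := by
  simpa [hf₀, Function.comp_def] using
    hf.tendsto_slope_zero_right.comp tendsto_inv_atTop_nhdsGT_zero

theorem hasDerivAt_integral_one_sub_mul_rpow_mul {c g : ℝ → ℝ} {a b : ℝ} (p : ℝ)
    (hc : Measurable c) (hc₁ : ∀ θ ∈ Ι a b, |c θ| ≤ 1) (hg : IntervalIntegrable g volume a b) :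
    HasDerivAt (fun t => ∫ θ in a..b, (1 - t * c θ) ^ p * g θ)
      (-p * ∫ θ in a..b, c θ * g θ) 0 := by
  have hbase : ∀ θ ∈ Ι a b, ∀ t ∈ Metric.ball (0 : ℝ) (1 / 2),
      1 / 2 ≤ 1 - t * c θ ∧ 1 - t * c θ ≤ 2 := by
    intro θ hθ t ht
    have hsmall : |t * c θ| ≤ 1 / 2 := by
      rw [abs_mul]
      calc |t| * |c θ| ≤ |t| := mul_le_of_le_one_right (abs_nonneg t) (hc₁ θ hθ)
        _ ≤ 1 / 2 := (mem_ball_zero_iff.mp ht).le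
    constructor <;> linarith [abs_le.mp hsmall]
  have hderiv := intervalIntegral.hasDerivAt_integral_of_dominated_loc_of_deriv_le
    (F := fun t θ => (1 - t * c θ) ^ p * g θ)
    (F' := fun t θ => -c θ * p * (1 - t * c θ) ^ (p - 1) * g θ)
    (bound := fun θ => |p| * 2 ^ |p - 1| * |g θ|)
    (Metric.ball_mem_nhds 0 one_half_pos)
    (Eventually.of_forall fun t =>
      (((hc.const_mul t).const_sub 1).pow_const p).aestronglyMeasurable.mul hg.def'.1)
    (by simpa using hg)
    ((by fun_prop : Measurable fun θ => -c θ * p * (1 - 0 * c θ) ^ (p - 1)).aestronglyMeasurable.mul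
      hg.def'.1)
    (ae_of_all _ fun θ hθ t ht => by
      obtain ⟨h₁, h₂⟩ := hbase θ hθ t ht
      rw [norm_mul, norm_mul, norm_mul, norm_neg, norm_of_nonneg (rpow_nonneg (by linarith) _)]
      simp only [norm_eq_abs]
      have hcr : |c θ| * (1 - t * c θ) ^ (p - 1) ≤ 2 ^ |p - 1| := by
        simpa using mul_le_mul (hc₁ θ hθ) (rpow_le_two_rpow_abs (p - 1) h₁ h₂)
          (rpow_nonneg (by linarith) _) zero_le_one
      calc |c θ| * |p| * (1 - t * c θ) ^ (p - 1) * |g θ|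
          = |p| * (|c θ| * (1 - t * c θ) ^ (p - 1)) * |g θ| := by ring
        _ ≤ |p| * 2 ^ |p - 1| * |g θ| := by gcongr)
    (hg.norm.const_mul _)
    (ae_of_all _ fun θ hθ t ht =>
      ((((hasDerivAt_id t).mul_const (c θ)).const_sub 1).rpow_const
        (Or.inl (by simp only [id]; linarith [(hbase θ hθ t ht).1]))).mul_const (g θ)
        |>.congr_deriv (by simp))
  refine hderiv.2.congr_deriv ?_
  rw [← intervalIntegral.integral_const_mul]
  refine intervalIntegral.integral_congr fun θ _ => ?_
  simp only [zero_mul, sub_zero, one_rpow]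
  ring

theorem integral_sin_pow_mul_cos_eq_zero (n : ℕ) : ∫ θ in 0..π, sin θ ^ n * cos θ = 0 := by
  simpa using integral_sin_pow_mul_cos_pow_odd (a := 0) (b := π) n 0

theorem integral_sin_pow_mul_cos_sq (n : ℕ) :
    ∫ θ in 0..π, sin θ ^ n * cos θ ^ 2 = (∫ θ in 0..π, sin θ ^ n) / (n + 2) := by
  have hsplit : ∀ θ, sin θ ^ n * cos θ ^ 2 = sin θ ^ n - sin θ ^ (n + 2) := fun θ => by
    rw [cos_sq']; ring
  simp_rw [hsplit]
  rw [intervalIntegral.integral_sub (by apply Continuous.intervalIntegrable; fun_prop)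
    (by apply Continuous.intervalIntegrable; fun_prop), integral_sin_pow]
  simp only [sin_zero, sin_pi, zero_pow n.succ_ne_zero, zero_mul, sub_self, zero_div, zero_add]
  field_simp
  ring

theorem integral_sub_rpow_mul_eq {c g : ℝ → ℝ} {a b η : ℝ} (p : ℝ) (hη : 0 < η)
    (hc : ∀ θ ∈ [[a, b]], c θ ≤ η) :
    ∫ θ in a..b, (η - c θ) ^ p * g θ = η ^ p * ∫ θ in a..b, (1 - η⁻¹ * c θ) ^ p * g θ := by
  rw [← intervalIntegral.integral_const_mul]
  refine intervalIntegral.integral_congr fun θ hθ => ?_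
  have h : 0 ≤ 1 - η⁻¹ * c θ := by
    rw [sub_nonneg, inv_mul_le_iff₀ hη, mul_one]; exact hc θ hθ
  rw [← mul_assoc, ← mul_rpow hη.le h, mul_sub, mul_one, mul_inv_cancel_left₀ hη.ne']

theorem rpow_mul_mul_rpow_mul_rpow {η p q x y : ℝ} (hη : 0 < η) (hy : 0 ≤ y)
    (hpq : p * (q + 1) = 1) : η ^ p * x * (η ^ p * y) ^ q = η * x * y ^ q := by
  rw [mul_rpow (rpow_nonneg hη.le p) hy, ← rpow_mul hη.le]
  calc η ^ p * x * (η ^ (p * q) * y ^ q) = η ^ (p * (q + 1)) * (x * y ^ q) := by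
        rw [mul_add, mul_one, rpow_add hη]; ring
    _ = η * x * y ^ q := by rw [hpq, rpow_one, mul_assoc]

theorem integral_sub_rpow_mul_mul_rpow_eventuallyEq {c g₁ g₂ : ℝ → ℝ} {a b p q : ℝ}
    (hab : a ≤ b) (hc : ∀ θ ∈ Icc a b, |c θ| ≤ 1) (hg₂ : ∀ θ ∈ Icc a b, 0 ≤ g₂ θ)
    (hpq : p * (q + 1) = 1) :
    (fun η => (∫ θ in a..b, (η - c θ) ^ p * g₁ θ) * (∫ θ in a..b, (η - c θ) ^ p * g₂ θ) ^ q)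
      =ᶠ[atTop] fun η => η * (∫ θ in a..b, (1 - η⁻¹ * c θ) ^ p * g₁ θ) *
        (∫ θ in a..b, (1 - η⁻¹ * c θ) ^ p * g₂ θ) ^ q := by
  filter_upwards [eventually_gt_atTop 1] with η hη
  have hη₀ : 0 < η := one_pos.trans hη
  have hcη : ∀ θ ∈ [[a, b]], c θ ≤ η := fun θ hθ =>
    (le_abs_self _).trans ((hc θ (uIcc_of_le hab ▸ hθ)).trans hη.le)
  simp only [integral_sub_rpow_mul_eq p hη₀ hcη]
  refine rpow_mul_mul_rpow_mul_rpow hη₀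
    (intervalIntegral.integral_nonneg hab fun θ hθ => mul_nonneg ?_ (hg₂ θ hθ)) hpq
  refine rpow_nonneg ?_ p
  rw [sub_nonneg, inv_mul_le_iff₀ hη₀, mul_one]
  exact hcη θ (uIcc_of_le hab ▸ hθ)

theorem tendsto_integral_sub_rpow_mul_mul_rpow {c g₁ g₂ : ℝ → ℝ} {a b p q : ℝ} (hab : a ≤ b)
    (hc : Measurable c) (hc₁ : ∀ θ ∈ Icc a b, |c θ| ≤ 1) (hpq : p * (q + 1) = 1)
    (hg₁ : IntervalIntegrable g₁ volume a b) (hg₁₀ : ∫ θ in a..b, g₁ θ = 0)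
    (hg₂ : IntervalIntegrable g₂ volume a b) (hg₂_nonneg : ∀ θ ∈ Icc a b, 0 ≤ g₂ θ)
    (hg₂_pos : 0 < ∫ θ in a..b, g₂ θ) :
    Tendsto
      (fun η => (∫ θ in a..b, (η - c θ) ^ p * g₁ θ) * (∫ θ in a..b, (η - c θ) ^ p * g₂ θ) ^ q)
      atTop (𝓝 (-p * (∫ θ in a..b, c θ * g₁ θ) * (∫ θ in a..b, g₂ θ) ^ q)) := by
  have hc₁' : ∀ θ ∈ Ι a b, |c θ| ≤ 1 := fun θ hθ =>
    hc₁ θ (Ioc_subset_Icc_self (uIoc_of_le hab ▸ hθ))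
  have h₁ := (hasDerivAt_integral_one_sub_mul_rpow_mul p hc hc₁' hg₁).tendsto_mul_inv_atTop
    (by simpa using hg₁₀)
  have h₂ := ((hasDerivAt_integral_one_sub_mul_rpow_mul p hc hc₁' hg₂).continuousAt.tendsto.comp
    tendsto_inv_atTop_zero).rpow_const (p := q) (Or.inl (by simpa using hg₂_pos.ne'))
  refine .congr' (integral_sub_rpow_mul_mul_rpow_eventuallyEq hab hc₁ hg₂_nonneg hpq).symm ?_
  simpa using h₁.mul h₂

theorem H_tendsto_atTop_general
    (d : ℕ) (hd : 1 ≤ d) (m : ℝ) (hm1 : m < 1) :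
    Filter.Tendsto
      (fun η : ℝ =>
        ((1 - m) / m) *
          ((d : ℝ) * (volume (Metric.ball (0 : EuclideanSpace ℝ (Fin d)) 1)).toReal) ^ (m - 1) *
          (∫ θ in (0 : ℝ)..π,
            (η - Real.cos θ) ^ ((1 : ℝ) / (m - 1)) * Real.sin θ ^ (d - 1) * Real.cos θ) *
          (∫ θ in (0 : ℝ)..π,
            (η - Real.cos θ) ^ ((1 : ℝ) / (m - 1)) * Real.sin θ ^ (d - 1)) ^ (m - 2))
      Filter.atTop
      (𝓝 (((d : ℝ) * (volume (Metric.ball (0 : EuclideanSpace ℝ (Fin d)) 1)).toReal *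
            ∫ θ in (0 : ℝ)..π, Real.sin θ ^ (d - 1)) ^ (m - 1) / (m * ((d : ℝ) + 1)))) := by
  set p : ℝ := 1 / (m - 1) with hp
  set n := d - 1 with hn
  set c : ℝ := d * (volume (Metric.ball (0 : EuclideanSpace ℝ (Fin d)) 1)).toReal
  set I := ∫ θ in 0..π, sin θ ^ n
  have hpq : p * (m - 2 + 1) = 1 := by rw [hp]; field_simp [(by linarith : m - 1 ≠ 0)]; ring
  have hlim := tendsto_integral_sub_rpow_mul_mul_rpow pi_pos.le continuous_cos.measurable
    (fun θ _ => abs_cos_le_one θ) hpq (g₁ := fun θ => sin θ ^ n * cos θ)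
    (by apply Continuous.intervalIntegrable; fun_prop) (integral_sin_pow_mul_cos_eq_zero n)
    (g₂ := fun θ => sin θ ^ n) (by apply Continuous.intervalIntegrable; fun_prop)
    (fun θ hθ => pow_nonneg (sin_nonneg_of_mem_Icc hθ) n) (integral_sin_pow_pos n)
  have hcos_sq : ∫ θ in 0..π, cos θ * (sin θ ^ n * cos θ) = I / (n + 2) := by
    rw [← integral_sin_pow_mul_cos_sq]
    exact intervalIntegral.integral_congr fun θ _ => by ring
  have hvalue : (1 - m) / m * c ^ (m - 1) * (-p * (I / (n + 2)) * I ^ (m - 2)) =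
      (c * I) ^ (m - 1) / (m * (d + 1)) := by
    have hI : 0 < I := integral_sin_pow_pos n
    have hnd : (n : ℝ) + 2 = d + 1 := by rw [hn, Nat.cast_sub hd]; push_cast; ring
    have hI_pow : I ^ (m - 1) = I * I ^ (m - 2) := by
      rw [← rpow_one_add' hI.le (by linarith)]; ring_nf
    rw [hnd, mul_rpow (by positivity) hI.le, hI_pow, hp]
    field_simp [(by linarith : m - 1 ≠ 0)]
    ring
  rw [hcos_sq] at hlim
  rw [← hvalue]
  refine (hlim.const_mul ((1 - m) / m * c ^ (m - 1))).congr fun η => ?_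
  simp only [mul_assoc]

/-- Limit of the bifurcation function `H` as `η → ∞`:
`H(η) = ((1-m)/m)(d w_d)^{m-1} (∫₀^π (η-cosθ)^{1/(m-1)} sin^{d-1}θ cosθ dθ)
        (∫₀^π (η-cosθ)^{1/(m-1)} sin^{d-1}θ dθ)^{m-2}` tends to
`|S^d|^{m-1}/(m(d+1))`, where `w_d` is the volume of the `d`-dimensional unit ball and
`|S^d| = d w_d ∫₀^π sin^{d-1}θ dθ` is the area of the unit `d`-sphere. -/
theorem H_tendsto_atTop
    (d : ℕ) (hd : 1 ≤ d) (m : ℝ) (hm0 : 0 < m) (hm1 : m < 1) :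
    Filter.Tendsto
      (fun η : ℝ =>
        ((1 - m) / m) *
          ((d : ℝ) * (volume (Metric.ball (0 : EuclideanSpace ℝ (Fin d)) 1)).toReal) ^ (m - 1) *
          (∫ θ in (0 : ℝ)..π,
            (η - Real.cos θ) ^ ((1 : ℝ) / (m - 1)) * Real.sin θ ^ (d - 1) * Real.cos θ) *
          (∫ θ in (0 : ℝ)..π,
            (η - Real.cos θ) ^ ((1 : ℝ) / (m - 1)) * Real.sin θ ^ (d - 1)) ^ (m - 2))
      Filter.atTop
      (𝓝 (((d : ℝ) * (volume (Metric.ball (0 : EuclideanSpace ℝ (Fin d)) 1)).toReal *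
            ∫ θ in (0 : ℝ)..π, Real.sin θ ^ (d - 1)) ^ (m - 1) / (m * ((d : ℝ) + 1)))) :=
  H_tendsto_atTop_general d hd m hm1
end
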